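/- arXiv:1112.0683 — 5 statements merged into one kernel-verified Lean document; each statement's English description precedes it below -/
import Mathlib

section
/- As α → ∞, φ''(1) = 2α² + 12α²e^{-α} + O(α²e^{-2α}), where φ is the Morse potential with r₀ = 1 + (1/α)·log((1+2e^{-α})/(1+2e^{-2α})). More precisely, there exist constants C, α₀ > 0 such that |φ''(1) - 2α² - 12α²e^{-α}| ≤ Cα²e^{-2α} for all α ≥ α₀. -/
/-- Equilibrium distance parameter of the Morse potential. -/
noncomputable def morseR0 (α : ℝ) : ℝ :=
  1 + (1 / α) * Real.log ((1 + 2 * Real.exp (-α)) / (1 + 2 * Real.exp (-2 * α)))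

/-- The (shifted) Morse potential with stiffness α and shift φ₀. -/
noncomputable def morse (α φ₀ : ℝ) (r : ℝ) : ℝ :=
  Real.exp (-2 * α * (r - morseR0 α)) - 2 * Real.exp (-α * (r - morseR0 α)) - φ₀

/-!
Writing `x = e^{-α}`, the choice of `r₀` makes `e^{-α(1 - r₀)}` the rational function
`q(x) = (1 + 2x)/(1 + 2x²)`, and `φ''(1) = α²(4q² - 2q)`. The remainder
`4q² - 2q - 2 - 12x` equals `2x²(2 - 28x - 4x² - 24x³)/(1 + 2x²)²`, which is `O(x²)` on `[0, 1]`.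
-/

open Real

theorem exp_neg_two_mul (α : ℝ) : exp (-2 * α) = exp (-α) ^ 2 := by
  rw [← exp_nat_mul]; push_cast; ring_nf

theorem hasDerivAt_exp_mul_sub (a c r : ℝ) :
    HasDerivAt (fun r => exp (a * (r - c))) (a * exp (a * (r - c))) r := by
  simpa [mul_comm] using (((hasDerivAt_id r).sub_const c).const_mul a).exp

theorem deriv_morse (α φ₀ : ℝ) : deriv (morse α φ₀) = fun r =>
    -2 * α * exp (-2 * α * (r - morseR0 α)) + 2 * α * exp (-α * (r - morseR0 α)) := by
  funext r
  refine ((((hasDerivAt_exp_mul_sub _ _ r).sub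
    ((hasDerivAt_exp_mul_sub _ _ r).const_mul 2)).sub_const φ₀).deriv).trans ?_
  ring

theorem deriv_deriv_morse (α φ₀ r : ℝ) :
    deriv (deriv (morse α φ₀)) r =
      α ^ 2 * (4 * exp (-α * (r - morseR0 α)) ^ 2 - 2 * exp (-α * (r - morseR0 α))) := by
  rw [deriv_morse, ← exp_nat_mul]
  refine ((((hasDerivAt_exp_mul_sub _ _ r).const_mul _).add
    ((hasDerivAt_exp_mul_sub _ _ r).const_mul _)).deriv).trans ?_
  push_cast
  ring_nf

noncomputable def morseRatio (x : ℝ) : ℝ := (1 + 2 * x) / (1 + 2 * x ^ 2)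

theorem exp_neg_mul_one_sub_morseR0 {α : ℝ} (hα : α ≠ 0) :
    exp (-α * (1 - morseR0 α)) = morseRatio (exp (-α)) := by
  have hpos : 0 < morseRatio (exp (-α)) := by unfold morseRatio; positivity
  rw [← exp_log hpos, morseR0, exp_neg_two_mul, morseRatio]
  congr 1
  field_simp
  ring

theorem morseRatio_remainder (x : ℝ) :
    4 * morseRatio x ^ 2 - 2 * morseRatio x - 2 - 12 * x =
      2 * x ^ 2 * (2 - 28 * x - 4 * x ^ 2 - 24 * x ^ 3) / (1 + 2 * x ^ 2) ^ 2 := by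
  have : 1 + 2 * x ^ 2 ≠ 0 := by positivity
  unfold morseRatio
  field_simp
  ring

theorem abs_morseRatio_remainder_le {x : ℝ} (hx₀ : 0 ≤ x) (hx₁ : x ≤ 1) :
    |4 * morseRatio x ^ 2 - 2 * morseRatio x - 2 - 12 * x| ≤ 108 * x ^ 2 := by
  have hpoly : |2 - 28 * x - 4 * x ^ 2 - 24 * x ^ 3| ≤ 54 := by
    rw [abs_le]
    constructor <;> nlinarith [pow_le_one₀ hx₀ hx₁ (n := 2), pow_le_one₀ hx₀ hx₁ (n := 3)]
  rw [morseRatio_remainder, abs_div, abs_mul, abs_of_nonneg (by positivity : 0 ≤ 2 * x ^ 2),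
    abs_of_pos (by positivity : (0 : ℝ) < (1 + 2 * x ^ 2) ^ 2)]
  calc 2 * x ^ 2 * |2 - 28 * x - 4 * x ^ 2 - 24 * x ^ 3| / (1 + 2 * x ^ 2) ^ 2
      ≤ 2 * x ^ 2 * |2 - 28 * x - 4 * x ^ 2 - 24 * x ^ 3| :=
        div_le_self (by positivity) (one_le_pow₀ (by nlinarith))
    _ ≤ 108 * x ^ 2 := by nlinarith

/-- φ''(1) = 2α² + 12α²e^{-α} + O(α²e^{-2α}) as α → ∞. -/
theorem stmt_2 (φ₀ : ℝ) :
    ∃ C α₀ : ℝ, 0 < C ∧ 0 < α₀ ∧ ∀ α : ℝ, α₀ ≤ α →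
      |deriv (deriv (morse α φ₀)) 1 - 2 * α ^ 2 - 12 * α ^ 2 * Real.exp (-α)|
        ≤ C * α ^ 2 * Real.exp (-2 * α) := by
  refine ⟨108, 1, by norm_num, one_pos, fun α hα => ?_⟩
  have hx₀ : 0 ≤ exp (-α) := (exp_pos _).le
  have hx₁ : exp (-α) ≤ 1 := exp_le_one_iff.mpr (by linarith)
  rw [deriv_deriv_morse, exp_neg_mul_one_sub_morseR0 (by linarith), exp_neg_two_mul]
  calc |α ^ 2 * (4 * morseRatio (exp (-α)) ^ 2 - 2 * morseRatio (exp (-α))) - 2 * α ^ 2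
        - 12 * α ^ 2 * exp (-α)|
      = α ^ 2 * |4 * morseRatio (exp (-α)) ^ 2 - 2 * morseRatio (exp (-α)) - 2
        - 12 * exp (-α)| := by
        rw [← abs_of_nonneg (sq_nonneg α), ← abs_mul, abs_of_nonneg (sq_nonneg α)]; ring_nf
    _ ≤ α ^ 2 * (108 * exp (-α) ^ 2) := by gcongr; exact abs_morseRatio_remainder_le hx₀ hx₁
    _ = 108 * α ^ 2 * exp (-α) ^ 2 := by ring
end

section
/- As α → ∞, φ'(2) = 2αe^{-α} + 2αe^{-2α} + O(αe^{-3α}): there exist constants C, α₀ > 0 such that |φ'(2) - 2αe^{-α} - 2αe^{-2α}| ≤ Cαe^{-3α} for all α ≥ α₀. -/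
/-- φ'(2) = 2αe^{-α} + 2αe^{-2α} + O(αe^{-3α}) as α → ∞. -/
theorem stmt_3 (φ₀ : ℝ) :
    ∃ C α₀ : ℝ, 0 < C ∧ 0 < α₀ ∧ ∀ α : ℝ, α₀ ≤ α →
      |deriv (morse α φ₀) 2 - 2 * α * Real.exp (-α) - 2 * α * Real.exp (-2 * α)|
        ≤ C * α * Real.exp (-3 * α) := by
  refine ⟨20, 1, by norm_num, by norm_num, fun α hα => ?_⟩
  have hα0 : (0 : ℝ) < α := lt_of_lt_of_le one_pos hα
  have hαne : α ≠ 0 := ne_of_gt hα0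
  set x : ℝ := Real.exp (-α) with hx
  have hxpos : 0 < x := Real.exp_pos _
  have hx1 : x < 1 := by
    rw [hx]
    exact Real.exp_lt_one_iff.mpr (by linarith)
  have hx2 : Real.exp (-2 * α) = x ^ 2 := by
    rw [hx, ← Real.exp_nat_mul]; ring_nf
  have hx3 : Real.exp (-3 * α) = x ^ 3 := by
    rw [hx, ← Real.exp_nat_mul]; ring_nf
  set B : ℝ := 1 + 2 * x ^ 2 with hB
  have hBpos : 0 < B := by positivity
  have hB1 : 1 ≤ B := by nlinarith
  set A : ℝ := 1 + 2 * x with hA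
  have hApos : 0 < A := by positivity
  set Q : ℝ := A / B with hQ
  have hQpos : 0 < Q := by positivity
  have hlogQ : morseR0 α = 1 + (1 / α) * Real.log Q := by
    rw [morseR0, hx2]
  have key1 : Real.exp (-α * (2 - morseR0 α)) = x * Q := by
    have h1 : -α * (2 - morseR0 α) = -α + Real.log Q := by
      rw [hlogQ]; field_simp; ring
    rw [h1, Real.exp_add, Real.exp_log hQpos]
  have key2 : Real.exp (-2 * α * (2 - morseR0 α)) = (x * Q) ^ 2 := by
    have h1 : -2 * α * (2 - morseR0 α) = (2 : ℕ) * (-α * (2 - morseR0 α)) := by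
      push_cast; ring
    rw [h1, Real.exp_nat_mul, key1]
  -- derivative
  have hd1 : HasDerivAt (fun r : ℝ => Real.exp (-2 * α * (r - morseR0 α)))
      (Real.exp (-2 * α * (2 - morseR0 α)) * (-2 * α)) 2 := by
    have := (((hasDerivAt_id (2 : ℝ)).sub_const (morseR0 α)).const_mul (-2 * α)).exp
    simpa [mul_comm] using this
  have hd2 : HasDerivAt (fun r : ℝ => Real.exp (-α * (r - morseR0 α)))
      (Real.exp (-α * (2 - morseR0 α)) * (-α)) 2 := by
    have := (((hasDerivAt_id (2 : ℝ)).sub_const (morseR0 α)).const_mul (-α)).exp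
    simpa [mul_comm] using this
  have hD : HasDerivAt (morse α φ₀)
      (Real.exp (-2 * α * (2 - morseR0 α)) * (-2 * α)
        - 2 * (Real.exp (-α * (2 - morseR0 α)) * (-α))) 2 :=
    (hd1.sub (hd2.const_mul 2)).sub_const φ₀
  rw [hD.deriv, key1, key2, hx2, hx3]
  have hEq : (x * Q) ^ 2 * (-2 * α) - 2 * (x * Q * -α) - 2 * α * x - 2 * α * x ^ 2
      = 2 * α * ((((-2 * x ^ 3 - 4 * x ^ 4) * B - 4 * x ^ 3 + 4 * x ^ 6)) / B ^ 2) := by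
    rw [hQ]
    field_simp
    ring
  rw [hEq, abs_mul, abs_of_pos (by linarith : (0:ℝ) < 2 * α), abs_div,
    abs_of_pos (by positivity : (0:ℝ) < B ^ 2)]
  have hnum : |(-2 * x ^ 3 - 4 * x ^ 4) * B - 4 * x ^ 3 + 4 * x ^ 6| ≤ 10 * x ^ 3 * B ^ 2 := by
    rw [abs_le, hB]
    constructor <;>
      nlinarith [pow_pos hxpos 3, pow_pos hxpos 5, pow_pos hxpos 7,
        mul_nonneg (pow_pos hxpos 3).le (sub_nonneg.mpr hx1.le),
        mul_nonneg (pow_pos hxpos 5).le (sub_nonneg.mpr hx1.le),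
        mul_nonneg (pow_pos hxpos 4).le (sub_nonneg.mpr hx1.le)]
  have h2 : |(-2 * x ^ 3 - 4 * x ^ 4) * B - 4 * x ^ 3 + 4 * x ^ 6| / B ^ 2 ≤ 10 * x ^ 3 := by
    rw [div_le_iff₀ (by positivity)]
    calc |(-2 * x ^ 3 - 4 * x ^ 4) * B - 4 * x ^ 3 + 4 * x ^ 6| ≤ 10 * x ^ 3 * B ^ 2 := hnum
      _ = 10 * x ^ 3 * B ^ 2 := by ring
  calc 2 * α * (|(-2 * x ^ 3 - 4 * x ^ 4) * B - 4 * x ^ 3 + 4 * x ^ 6| / B ^ 2)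
      ≤ 2 * α * (10 * x ^ 3) := mul_le_mul_of_nonneg_left h2 (by linarith)
    _ = 20 * α * x ^ 3 := by ring
end

section
/- Let a > 0, b < 0 with a + 4b > 0, let λ ∈ (0,1) satisfy bλ² + (a+2b)λ + b = 0, and let c ∈ ℝ. Define u : ℕ → ℝ by u_ℓ = (c·λ^ℓ)/(a + b(1+λ)). Then u solves the linear system: (a+b)u₀ + b·u₁ = c, and b·u_{ℓ-1} + (a+2b)u_ℓ + b·u_{ℓ+1} = 0 for all ℓ ≥ 1. -/
/-- the explicit geometric sequence u_ℓ = cλ^ℓ/(a + b(1+λ)) solves the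
linearized atomistic equilibrium equations of the semi-infinite chain. -/
theorem stmt_6 (a b c lam : ℝ) (ha : 0 < a) (hb : b < 0) (hab : 0 < a + 4 * b)
    (hlam : lam ∈ Set.Ioo (0 : ℝ) 1)
    (hroot : b * lam ^ 2 + (a + 2 * b) * lam + b = 0)
    (u : ℕ → ℝ) (hu : ∀ ℓ : ℕ, u ℓ = c * lam ^ ℓ / (a + b * (1 + lam))) :
    (a + b) * u 0 + b * u 1 = c ∧
    ∀ ℓ : ℕ, 1 ≤ ℓ → b * u (ℓ - 1) + (a + 2 * b) * u ℓ + b * u (ℓ + 1) = 0 := by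
  have hD : a + b * (1 + lam) ≠ 0 := by nlinarith [hlam.1, hlam.2]
  constructor
  · rw [hu 0, hu 1]; field_simp; ring
  · intro ℓ hℓ
    obtain ⟨k, rfl⟩ : ∃ k, ℓ = k + 1 := ⟨ℓ - 1, (Nat.succ_pred_eq_of_pos hℓ).symm⟩
    simp only [Nat.add_sub_cancel, hu]
    field_simp
    linear_combination (c * lam ^ k) * hroot
end

section
/- Let a > 0, b < 0 with a + 4b > 0 and λ ∈ (0,1) satisfying bλ² + (a+2b)λ + b = 0. Then the solution u_ℓ = c·λ^ℓ/(a+b(1+λ)) is the unique solution of the system (a+b)u₀ + b·u₁ = c, b·u_{ℓ-1} + (a+2b)u_ℓ + b·u_{ℓ+1} = 0 (ℓ ≥ 1) among sequences tending to 0 at infinity. -/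
/-- uniqueness of the geometric solution of the linearized atomistic chain
among sequences tending to 0 at infinity. -/
theorem stmt_7 (a b c lam : ℝ) (ha : 0 < a) (hb : b < 0) (hab : 0 < a + 4 * b)
    (hlam : lam ∈ Set.Ioo (0 : ℝ) 1)
    (hroot : b * lam ^ 2 + (a + 2 * b) * lam + b = 0)
    (u : ℕ → ℝ)
    (hu0 : Filter.Tendsto u Filter.atTop (nhds 0))
    (heq0 : (a + b) * u 0 + b * u 1 = c)
    (heq : ∀ ℓ : ℕ, 1 ≤ ℓ → b * u (ℓ - 1) + (a + 2 * b) * u ℓ + b * u (ℓ + 1) = 0) :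
    ∀ ℓ : ℕ, u ℓ = c * lam ^ ℓ / (a + b * (1 + lam)) := by
  obtain ⟨hl0, hl1⟩ := hlam
  set D := a + b * (1 + lam) with hDdef
  have hlamne : lam ≠ 0 := ne_of_gt hl0
  have hbne : b ≠ 0 := ne_of_lt hb
  have h1 : lam * D = -b * (1 + lam) := by rw [hDdef]; nlinarith [hroot]
  have hDpos : 0 < D := by nlinarith
  have hDne : D ≠ 0 := ne_of_gt hDpos
  set v : ℕ → ℝ := fun ℓ => u ℓ - c * lam ^ ℓ / D with hvdef
  have hv0 : Filter.Tendsto v Filter.atTop (nhds 0) := by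
    have h1 : Filter.Tendsto (fun ℓ : ℕ => c * lam ^ ℓ / D) Filter.atTop (nhds 0) := by
      have h2 := tendsto_pow_atTop_nhds_zero_of_lt_one (le_of_lt hl0) hl1
      have h3 := (h2.const_mul c).div_const D
      simpa using h3
    have := hu0.sub h1
    simpa using this
  have hveq : ∀ n : ℕ, b * v n + (a + 2 * b) * v (n + 1) + b * v (n + 2) = 0 := by
    intro n
    have h := heq (n + 1) (by omega)
    simp only [Nat.add_sub_cancel] at h
    have hpart : b * (c * lam ^ n / D) + (a + 2 * b) * (c * lam ^ (n + 1) / D)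
        + b * (c * lam ^ (n + 2) / D) = 0 := by
      have : b * (c * lam ^ n / D) + (a + 2 * b) * (c * lam ^ (n + 1) / D)
          + b * (c * lam ^ (n + 2) / D)
          = c * lam ^ n / D * (b * lam ^ 2 + (a + 2 * b) * lam + b) := by ring
      rw [this, hroot, mul_zero]
    simp only [hvdef]
    linear_combination h - hpart
  have hrec : ∀ n : ℕ, lam * (v (n + 2) - lam * v (n + 1)) = v (n + 1) - lam * v n := by
    intro n
    have h2 : b * (lam * (v (n + 2) - lam * v (n + 1)) - (v (n + 1) - lam * v n)) = 0 := by
      linear_combination lam * hveq n - v (n + 1) * hroot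
    rcases mul_eq_zero.mp h2 with h | h
    · exact absurd h hbne
    · linarith
  set w : ℕ → ℝ := fun n => v (n + 1) - lam * v n with hwdef
  have hw : ∀ n : ℕ, lam * w (n + 1) = w n := fun n => hrec n
  have hwconst : ∀ n : ℕ, w 0 = lam ^ n * w n := by
    intro n
    induction n with
    | zero => simp
    | succ k ih => rw [ih, ← hw k]; ring
  have hwt : Filter.Tendsto w Filter.atTop (nhds 0) := by
    have h1 : Filter.Tendsto (fun n : ℕ => v (n + 1)) Filter.atTop (nhds 0) :=
      hv0.comp (Filter.tendsto_add_atTop_nat 1)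
    have h2 := h1.sub (hv0.const_mul lam)
    simpa [hwdef] using h2
  have hw0 : w 0 = 0 := by
    have h1 : Filter.Tendsto (fun n : ℕ => lam ^ n * w n) Filter.atTop (nhds 0) := by
      have := (tendsto_pow_atTop_nhds_zero_of_lt_one (le_of_lt hl0) hl1).mul hwt
      simpa using this
    have h2 : Filter.Tendsto (fun n : ℕ => lam ^ n * w n) Filter.atTop (nhds (w 0)) := by
      have : (fun n : ℕ => lam ^ n * w n) = fun _ => w 0 := by
        funext n; exact (hwconst n).symm
      rw [this]; exact tendsto_const_nhds
    exact tendsto_nhds_unique h2 h1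
  have hwz : ∀ n : ℕ, w n = 0 := by
    intro n
    induction n with
    | zero => exact hw0
    | succ k ih =>
      have := hw k
      rw [ih] at this
      rcases mul_eq_zero.mp this with h | h
      · exact absurd h hlamne
      · exact h
  have hvgeom : ∀ n : ℕ, v n = lam ^ n * v 0 := by
    intro n
    induction n with
    | zero => simp
    | succ k ih =>
      have h := hwz k
      have : v (k + 1) = lam * v k := by
        have : v (k + 1) - lam * v k = 0 := h
        linarith
      rw [this, ih]; ring
  have hv00 : v 0 = 0 := by
    have hb0 : (a + b) * v 0 + b * v 1 = 0 := by
      have : (a + b) * v 0 + b * v 1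
          = (a + b) * u 0 + b * u 1 - ((a + b) * (c * lam ^ 0 / D) + b * (c * lam ^ 1 / D)) := by
        simp only [hvdef]; ring
      rw [this, heq0]
      have : (a + b) * (c * lam ^ 0 / D) + b * (c * lam ^ 1 / D) = c * D / D := by
        rw [hDdef]; ring
      rw [this, mul_div_assoc, div_self hDne, mul_one]
      ring
    have hv1 : v 1 = lam * v 0 := by
      have := hvgeom 1; simpa using this
    rw [hv1] at hb0
    have hD0 : D * v 0 = 0 := by rw [hDdef]; linarith [hb0]; 
    rcases mul_eq_zero.mp hD0 with h | h
    · exact absurd h hDne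
    · exact h
  intro ℓ
  have := hvgeom ℓ
  rw [hv00, mul_zero] at this
  have : u ℓ - c * lam ^ ℓ / D = 0 := this
  linarith
end

section
/- Let φ be C² with φ(1)+φ(2)=0. Then E^a : ℓ¹(ℕ) → ℝ, E^a(u) = Σ_{ℓ≥0}[φ(1+u_ℓ) + φ(2+u_ℓ+u_{ℓ+1})], is Fréchet differentiable at 0 with derivative ⟨δE^a(0), v⟩ = Σ_{ℓ≥0}[φ'(1)v_ℓ + φ'(2)(v_ℓ+v_{ℓ+1})]. -/
/-!
Because `φ 1 + φ 2 = 0`, the energy splits as `E^a u = ∑ (φ (1 + u ℓ) - φ 1) + ∑ (φ (2 + w ℓ) - φ 2)`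
with `w = u + S u`, `S` the left shift, which is a bounded operator on `ℓ¹`. Each sum
`u ↦ ∑ (f (a + u i) - f a)` has derivative `f' a • ∑` at `0`: if `‖u‖ < δ` then every `|u i| < δ`,
so the first-order bound `|f (a + t) - f a - f' a t| ≤ ε |t|` for `|t| < δ` sums to `ε ‖u‖`.
-/

open Filter Asymptotics Topology
open scoped lp

section Superposition

variable {ι : Type*} {f : ℝ → ℝ} {f' a : ℝ}

lemma summable_sub_of_hasDerivAt (hf : HasDerivAt f f' a) (u : ℓ¹(ι, ℝ)) :
    Summable fun i => f (a + u i) - f a := by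
  have hO : (fun t => f (a + t) - f a) =O[𝓝 0] id := by
    have := hf.isBigO_sub.comp_tendsto (continuous_const_add a |>.tendsto' 0 a (add_zero a))
    simp only [Function.comp_def, add_sub_cancel_left] at this
    exact this
  exact hO.comp_summable (lp.memℓp u).summable_of_one

lemma hasFDerivAt_tsum_sub (hf : HasDerivAt f f' a) :
    HasFDerivAt (fun u : ℓ¹(ι, ℝ) => ∑' i, (f (a + u i) - f a))
      (f' • lp.tsumCLM ℝ ι ℝ) 0 := by
  rw [hasFDerivAt_iff_isLittleO_nhds_zero, isLittleO_iff]
  intro ε hε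
  obtain ⟨δ, hδ, hr⟩ := Metric.eventually_nhds_iff.1
    ((hasDerivAt_iff_isLittleO_nhds_zero.1 hf).def hε)
  filter_upwards [Metric.ball_mem_nhds 0 hδ] with u hu
  have hremainder : ∑' i, (f (a + u i) - f a) - f' * ∑' i, u i
      = ∑' i, (f (a + u i) - f a - u i • f') := by
    rw [← tsum_mul_left, ← Summable.tsum_sub (summable_sub_of_hasDerivAt hf u)
      ((lp.memℓp u).summable_of_one.mul_left f')]
    simp only [smul_eq_mul, mul_comm]
  simp only [zero_add, ZeroMemClass.coe_zero, PreLp.zero_apply, add_zero, sub_self, tsum_zero,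
    sub_zero, smul_apply, lp.tsumCLM_apply, smul_eq_mul, hremainder]
  have hnorm : HasSum (fun i => ε * ‖u i‖) (ε * ‖u‖) := by
    simpa using (lp.hasSum_norm (p := 1) (by norm_num) u).mul_left ε
  refine tsum_of_norm_bounded hnorm fun i => hr ?_
  rw [dist_zero_right]
  exact (lp.norm_apply_le_norm one_ne_zero u i).trans_lt (mem_ball_zero_iff.1 hu)

end Superposition

section Shift

variable {𝕜 E : Type*} [NormedField 𝕜] [NormedAddCommGroup E] [NormedSpace 𝕜 E]

lemma memℓp_one_shift (u : ℓ¹(ℕ, E)) : Memℓp (fun n => u (n + 1)) 1 :=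
  memℓp_gen <| by simpa using (summable_nat_add_iff 1).2 ((lp.memℓp u).summable one_pos)

lemma norm_shift_le (u : ℓ¹(ℕ, E)) :
    ‖(⟨fun n => u (n + 1), memℓp_one_shift u⟩ : ℓ¹(ℕ, E))‖ ≤ ‖u‖ := by
  have hu : Summable fun n => ‖u n‖ := by simpa using (lp.memℓp u).summable one_pos
  have hnorm : ‖u‖ = ∑' n, ‖u n‖ := by simpa using lp.norm_eq_tsum_rpow (p := 1) (by norm_num) u
  refine lp.norm_le_of_tsum_le (by norm_num) (norm_nonneg u) ?_
  simp only [ENNReal.toReal_one, Real.rpow_one]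
  rw [hnorm, hu.tsum_eq_zero_add]
  exact le_add_of_nonneg_left (norm_nonneg _)

variable (𝕜 E) in
noncomputable def shiftLeftCLM : ℓ¹(ℕ, E) →L[𝕜] ℓ¹(ℕ, E) :=
  LinearMap.mkContinuous
    { toFun u := ⟨fun n => u (n + 1), memℓp_one_shift u⟩
      map_add' _ _ := rfl
      map_smul' _ _ := rfl }
    1 fun u => (one_mul ‖u‖).symm ▸ norm_shift_le u

end Shift

/-- the atomistic energy E^a is Fréchet differentiable at 0 on ℓ¹(ℕ),
with derivative ⟨δE^a(0), v⟩ = Σ_ℓ [φ'(1)v_ℓ + φ'(2)(v_ℓ + v_{ℓ+1})]. -/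
theorem stmt_17 (φ : ℝ → ℝ) (hφ : ContDiff ℝ 2 φ) (h1 : φ 1 + φ 2 = 0)
    (Ea : lp (fun _ : ℕ => ℝ) 1 → ℝ)
    (hEa : ∀ u : lp (fun _ : ℕ => ℝ) 1,
      Ea u = ∑' ℓ : ℕ, (φ (1 + u ℓ) + φ (2 + u ℓ + u (ℓ + 1)))) :
    ∃ L : lp (fun _ : ℕ => ℝ) 1 →L[ℝ] ℝ,
      (∀ v : lp (fun _ : ℕ => ℝ) 1,
        L v = ∑' ℓ : ℕ, (deriv φ 1 * v ℓ + deriv φ 2 * (v ℓ + v (ℓ + 1)))) ∧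
      HasFDerivAt Ea L 0 := by
  have hφ' (a : ℝ) : HasDerivAt φ (deriv φ a) a :=
    (hφ.differentiable (by norm_num) a).hasDerivAt
  set S := ContinuousLinearMap.id ℝ ℓ¹(ℕ, ℝ) + shiftLeftCLM ℝ ℝ
  have hS (u : ℓ¹(ℕ, ℝ)) (ℓ : ℕ) : S u ℓ = u ℓ + u (ℓ + 1) := rfl
  have hsplit : Ea = fun u => ∑' ℓ, (φ (1 + u ℓ) - φ 1) + ∑' ℓ, (φ (2 + S u ℓ) - φ 2) := by
    funext u
    rw [hEa, ← Summable.tsum_add (summable_sub_of_hasDerivAt (hφ' 1) u)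
      (summable_sub_of_hasDerivAt (hφ' 2) (S u))]
    congr! 2 with ℓ
    rw [hS, ← add_assoc]
    linear_combination h1
  have hsecond : HasFDerivAt (fun u : ℓ¹(ℕ, ℝ) => ∑' ℓ, (φ (2 + u ℓ) - φ 2)) _ (S 0) :=
    (map_zero S).symm ▸ hasFDerivAt_tsum_sub (hφ' 2)
  refine ⟨deriv φ 1 • lp.tsumCLM ℝ ℕ ℝ + (deriv φ 2 • lp.tsumCLM ℝ ℕ ℝ).comp S, fun v => ?_, ?_⟩
  · show deriv φ 1 * ∑' ℓ, v ℓ + deriv φ 2 * ∑' ℓ, S v ℓ = _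
    rw [← tsum_mul_left, ← tsum_mul_left, ← Summable.tsum_add
      ((lp.memℓp v).summable_of_one.mul_left _) ((lp.memℓp (S v)).summable_of_one.mul_left _)]
    rfl
  · rw [hsplit]
    exact (hasFDerivAt_tsum_sub (hφ' 1)).add (hsecond.comp 0 S.hasFDerivAt)
end
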